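/- Let Ω ⊂ ℝP^{n} be a properly convex open set and Γ a discrete group of projective automorphisms acting properly discontinuously and cocompactly on Ω. Then Ω is maximal for inclusion among Γ-invariant properly convex open subsets of ℝP^n: if Ω' is a Γ-invariant properly convex open set containing Ω, then Ω' = Ω. -/

import Mathlib

/-- A set `C ⊆ ℝ^{n+1}` is a properly convex open cone if it is open, convex, nonempty,
invariant under positive scaling, and its closure is contained (away from `0`) in an open
linear half-space.  Rays of such a cone are exactly the points of a properly convex open
subset of `ℝP^n`. -/
def IsProperlyConvexCone {n : ℕ} (C : Set (Fin (n + 1) → ℝ)) : Prop :=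
  IsOpen C ∧ Convex ℝ C ∧ C.Nonempty ∧
    (∀ v ∈ C, ∀ t : ℝ, 0 < t → t • v ∈ C) ∧
    ∃ f : (Fin (n + 1) → ℝ) →ₗ[ℝ] ℝ, ∀ v ∈ closure C, v ≠ 0 → 0 < f v

/-! Since the cone `C'` is connected and `C ⊆ C'` is open and nonempty, it suffices to show that
`C` is closed in `C'`. Let `v ∈ C'` be a limit of `v_k ∈ C`. Cocompactness gives `γ_k ∈ Γ` and
`t_k > 0` with `t_k γ_k v_k` in a fixed compact `K ⊆ C`; after normalising, a subsequence gives
`γ_k / ‖γ_k‖ → M` with `‖M‖ = 1` and `t_k γ_k v_k → w ∈ K`. The limit `M` maps `C'` into its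
closure, which contains no line, so `M v ≠ 0`; hence `M v` is a positive multiple of `w` and lies
in `C`. As `C` is open, `γ_k v ∈ C` for some `k`, and `Γ`-invariance of `C` gives `v ∈ C`. -/

open Set Filter Topology

theorem LinearMap.eq_zero_of_mapsTo_of_apply_eq_zero {E F : Type*} [NormedAddCommGroup E]
    [NormedSpace ℝ E] [AddCommGroup F] [Module ℝ F] {U : Set E} {S : Set F} {f : F →ₗ[ℝ] ℝ}
    (hU : IsOpen U) (hf : ∀ y ∈ S, y ≠ 0 → 0 < f y) {L : E →ₗ[ℝ] F} (hL : MapsTo L U S)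
    {v : E} (hv : v ∈ U) (hLv : L v = 0) : L = 0 := by
  ext u
  by_contra hu
  have hline : Continuous fun t : ℝ => v + t • u := by fun_prop
  obtain ⟨ε, hε, hball⟩ := Metric.isOpen_iff.mp (hU.preimage hline) 0 (by simpa using hv)
  have hS : ∀ t : ℝ, |t| < ε → t • L u ∈ S := fun t ht => by
    simpa [hLv] using hL (hball (by simpa using ht))
  have hy : (ε / 2) • L u ≠ 0 := smul_ne_zero (by positivity) hu
  have h₁ := hf _ (hS (ε / 2) (by rw [abs_of_pos (by positivity)]; linarith)) hy
  have h₂ := hf _ (hS (-(ε / 2)) (by rw [abs_neg, abs_of_pos (by positivity)]; linarith))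
    (by simpa [neg_smul] using hy)
  rw [neg_smul, map_neg] at h₂
  linarith

theorem eq_smul_of_tendsto_smul {ι E : Type*} [NormedAddCommGroup E] [NormedSpace ℝ E]
    {l : Filter ι} [l.NeBot] {s : ι → ℝ} {y : ι → E} {y₀ w : E} (hs : ∀ i, 0 ≤ s i)
    (hy : Tendsto y l (𝓝 y₀)) (hy₀ : y₀ ≠ 0) (hw : Tendsto (fun i => s i • y i) l (𝓝 w)) :
    w = (‖w‖ / ‖y₀‖) • y₀ := by
  have hs_lim : Tendsto s l (𝓝 (‖w‖ / ‖y₀‖)) := by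
    refine (hw.norm.div hy.norm (norm_ne_zero_iff.mpr hy₀)).congr' ?_
    filter_upwards [hy.eventually_ne hy₀] with i hi
    rw [Pi.div_apply, norm_smul, Real.norm_of_nonneg (hs i),
      mul_div_cancel_right₀ _ (norm_ne_zero_iff.mpr hi)]
  exact tendsto_nhds_unique hw (hs_lim.smul hy)

theorem Filter.Tendsto.clm_apply {ι E F : Type*} [NormedAddCommGroup E]
    [NormedSpace ℝ E] [NormedAddCommGroup F] [NormedSpace ℝ F] {l : Filter ι}
    {g : ι → E →L[ℝ] F} {g₀ : E →L[ℝ] F} {x : ι → E} {x₀ : E}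
    (hg : Tendsto g l (𝓝 g₀)) (hx : Tendsto x l (𝓝 x₀)) :
    Tendsto (fun i => g i (x i)) l (𝓝 (g₀ x₀)) :=
  (isBoundedBilinearMap_apply.continuous.tendsto (g₀, x₀)).comp (hg.prodMk_nhds hx)

theorem closure_inter_subset_of_cocompact {E : Type*} [NormedAddCommGroup E] [NormedSpace ℝ E]
    [FiniteDimensional ℝ E] {C C' K : Set E} {S : Set (E →L[ℝ] E)} (hCo : IsOpen C)
    (hCs : ∀ v ∈ C, ∀ t : ℝ, 0 < t → t • v ∈ C) (hC'o : IsOpen C')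
    (hC's : ∀ v ∈ C', ∀ t : ℝ, 0 < t → t • v ∈ C') {f : E →ₗ[ℝ] ℝ}
    (hf : ∀ v ∈ closure C', v ≠ 0 → 0 < f v)
    (hSC : ∀ g ∈ S, ∀ v, g v ∈ C → v ∈ C) (hSC' : ∀ g ∈ S, MapsTo g C' C')
    (hK : IsCompact K) (hK0 : 0 ∉ K) (hKC : K ⊆ C)
    (hcov : ∀ v ∈ C, ∃ g ∈ S, ∃ t : ℝ, 0 < t ∧ t • g v ∈ K) :
    closure C ∩ C' ⊆ C := by
  rintro v ⟨hvC, hvC'⟩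
  obtain ⟨x, hxC, hxv⟩ := mem_closure_iff_seq_limit.mp hvC
  choose g hgS t ht hgK using fun k => hcov (x k) (hxC k)
  have hg0 : ∀ k, g k ≠ 0 := fun k h => hK0 (by simpa [h] using hgK k)
  have hgpos : ∀ k, 0 < ‖g k‖ := fun k => norm_pos_iff.mpr (hg0 k)
  set M : ℕ → E →L[ℝ] E := fun k => ‖g k‖⁻¹ • g k
  obtain ⟨⟨M₀, w⟩, ⟨hM₀, hwK⟩, φ, hφ, hlim⟩ :=
    ((isCompact_sphere (0 : E →L[ℝ] E) 1).prod hK).tendsto_subseq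
      (x := fun k => (M k, t k • g k (x k)))
      (fun k => ⟨by simp [M, norm_smul, (hgpos k).ne'], hgK k⟩)
  have hMlim : Tendsto (fun k => M (φ k)) atTop (𝓝 M₀) := (continuous_fst.tendsto _).comp hlim
  have hwlim : Tendsto (fun k => t (φ k) • g (φ k) (x (φ k))) atTop (𝓝 w) :=
    (continuous_snd.tendsto _).comp hlim
  have hMC' : ∀ k, MapsTo (M k) C' C' := fun k y hy =>
    hC's _ (hSC' _ (hgS k) hy) _ (inv_pos.mpr (hgpos k))
  have hM₀C' : MapsTo M₀ C' (closure C') := fun y hy =>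
    mem_closure_of_tendsto (hMlim.clm_apply tendsto_const_nhds)
      (Eventually.of_forall fun k => hMC' (φ k) hy)
  -- `closure C'` contains no line, so the nonzero map `M₀` cannot vanish on `C'`
  have hM₀v : M₀ v ≠ 0 := by
    intro h
    have hM₀0 : M₀ = 0 := ContinuousLinearMap.coe_injective <| by
      simpa using LinearMap.eq_zero_of_mapsTo_of_apply_eq_zero hC'o hf
        (L := M₀.toLinearMap) hM₀C' hvC' h
    simp [hM₀0] at hM₀
  have hw : w = (‖w‖ / ‖M₀ v‖) • M₀ v := by
    refine eq_smul_of_tendsto_smul (s := fun k => t (φ k) * ‖g (φ k)‖)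
      (fun k => (mul_pos (ht _) (hgpos _)).le)
      (hMlim.clm_apply (hxv.comp hφ.tendsto_atTop)) hM₀v (hwlim.congr fun k => ?_)
    simp [M, smul_smul, (hgpos (φ k)).ne']
  have hM₀vC : M₀ v ∈ C := by
    set c := ‖w‖ / ‖M₀ v‖
    have hc : 0 < c :=
      div_pos (norm_pos_iff.mpr fun h => hK0 (h ▸ hwK)) (norm_pos_iff.mpr hM₀v)
    have := hCs w (hKC hwK) _ (inv_pos.mpr hc)
    rwa [hw, smul_smul, inv_mul_cancel₀ hc.ne', one_smul] at this
  obtain ⟨k, hk⟩ := ((hMlim.clm_apply tendsto_const_nhds).eventually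
    (hCo.mem_nhds hM₀vC)).exists
  refine hSC _ (hgS (φ k)) _ ?_
  simpa [M, smul_smul, (hgpos _).ne'] using hCs _ hk _ (hgpos (φ k))

theorem divisible_convex_maximal_general {n : ℕ}
    (Γ : Subgroup (Matrix.GeneralLinearGroup (Fin (n + 1)) ℝ))
    (C C' : Set (Fin (n + 1) → ℝ))
    (hC : IsProperlyConvexCone C) (hC' : IsProperlyConvexCone C')
    (hinv : ∀ γ ∈ Γ, (γ : Matrix (Fin (n + 1)) (Fin (n + 1)) ℝ).mulVec '' C = C)
    (hinv' : ∀ γ ∈ Γ, (γ : Matrix (Fin (n + 1)) (Fin (n + 1)) ℝ).mulVec '' C' = C')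
    -- the action of `Γ` on `Ω` is cocompact:
    (hcocpt : ∃ K : Set (Fin (n + 1) → ℝ), IsCompact K ∧ (0 : Fin (n + 1) → ℝ) ∉ K ∧
      K ⊆ C ∧ ∀ v ∈ C, ∃ γ ∈ Γ, ∃ t : ℝ, 0 < t ∧
        t • ((γ : Matrix (Fin (n + 1)) (Fin (n + 1)) ℝ)).mulVec v ∈ K)
    (hsub : C ⊆ C') :
    C' = C := by
  obtain ⟨hCo, -, ⟨p, hp⟩, hCs, -⟩ := hC
  obtain ⟨hC'o, hC'conv, -, hC's, f, hf⟩ := hC'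
  obtain ⟨K, hK, hK0, hKC, hcov⟩ := hcocpt
  let S := (fun γ : Matrix.GeneralLinearGroup (Fin (n + 1)) ℝ =>
    LinearMap.toContinuousLinearMap
      (Matrix.toLin' (γ : Matrix (Fin (n + 1)) (Fin (n + 1)) ℝ))) '' Γ
  have hSC : ∀ g ∈ S, ∀ v, g v ∈ C → v ∈ C := by
    rintro _ ⟨γ, hγ, rfl⟩ v hv
    rw [← hinv _ (inv_mem hγ)]
    exact ⟨_, hv, by simp [Matrix.mulVec_mulVec]⟩
  have hSC' : ∀ g ∈ S, MapsTo g C' C' := by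
    rintro _ ⟨γ, hγ, rfl⟩ v hv
    rw [← hinv' γ hγ]
    exact ⟨v, hv, by simp⟩
  have hcovS : ∀ v ∈ C, ∃ g ∈ S, ∃ t : ℝ, 0 < t ∧ t • g v ∈ K := fun v hv => by
    obtain ⟨γ, hγ, t, ht, htK⟩ := hcov v hv
    exact ⟨_, ⟨γ, hγ, rfl⟩, t, ht, by simpa using htK⟩
  exact (hC'conv.isPreconnected.subset_of_closure_inter_subset hCo ⟨p, hsub hp, hp⟩
    (closure_inter_subset_of_cocompact hCo hCs hC'o hC's hf hSC hSC' hK hK0 hKC hcovS)).antisymm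
    hsub

/-- Let `Ω ⊂ ℝP^n` be a properly convex open set (encoded by its cone `C`)
and `Γ` a discrete group of projective automorphisms (a subgroup of `GL_{n+1}(ℝ)`) acting
properly discontinuously and cocompactly on `Ω`.  Then `Ω` is maximal among `Γ`-invariant
properly convex open subsets of `ℝP^n`: any `Γ`-invariant properly convex open set `Ω'`
containing `Ω` equals `Ω`.  Proper discontinuity and cocompactness of the projective action
are phrased via compact sets of nonzero vector representatives of rays. -/
theorem divisible_convex_maximal {n : ℕ}
    (Γ : Subgroup (Matrix.GeneralLinearGroup (Fin (n + 1)) ℝ))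
    (C C' : Set (Fin (n + 1) → ℝ))
    (hC : IsProperlyConvexCone C) (hC' : IsProperlyConvexCone C')
    (hinv : ∀ γ ∈ Γ, (γ : Matrix (Fin (n + 1)) (Fin (n + 1)) ℝ).mulVec '' C = C)
    (hinv' : ∀ γ ∈ Γ, (γ : Matrix (Fin (n + 1)) (Fin (n + 1)) ℝ).mulVec '' C' = C')
    -- the action of `Γ` on `Ω` is properly discontinuous:
    (hproper : ∀ K : Set (Fin (n + 1) → ℝ), IsCompact K → (0 : Fin (n + 1) → ℝ) ∉ K →
      K ⊆ C → Set.Finite {γ : Γ | ∃ v ∈ K, ∃ t : ℝ, 0 < t ∧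
        t • ((γ : Matrix.GeneralLinearGroup (Fin (n + 1)) ℝ) :
          Matrix (Fin (n + 1)) (Fin (n + 1)) ℝ).mulVec v ∈ K})
    -- the action of `Γ` on `Ω` is cocompact:
    (hcocpt : ∃ K : Set (Fin (n + 1) → ℝ), IsCompact K ∧ (0 : Fin (n + 1) → ℝ) ∉ K ∧
      K ⊆ C ∧ ∀ v ∈ C, ∃ γ ∈ Γ, ∃ t : ℝ, 0 < t ∧
        t • ((γ : Matrix (Fin (n + 1)) (Fin (n + 1)) ℝ)).mulVec v ∈ K)
    (hsub : C ⊆ C') :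
    C' = C :=
  divisible_convex_maximal_general Γ C C' hC hC' hinv hinv' hcocpt hsub
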